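/- arXiv:2101.02148 — 3 statements merged into one kernel-verified Lean document; each statement's English description precedes it below -/
import Mathlib

section
/- Let Θ* be the minimizer of the graphical elastic net objective F(Θ) = -log det Θ + tr(SΘ) + λ(α‖Θ‖₁ + (1-α)/2 ‖Θ‖₂²) over positive definite p×p symmetric matrices, with λ > 0 and α ∈ (0,1]. If |S_{ij}| ≤ λα for all i ≠ j, then Θ* is a diagonal matrix. -/
/-!
Suppose `Θ*ᵢⱼ ≠ 0` for some `i ≠ j`, and let `M` be `Θ*` with the off-diagonal entries of row
and column `i` set to zero. In the block decomposition `{i} ⊕ {i}ᶜ`, `M` is the block-diagonal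
part of `Θ*`, so it is positive definite, and the Schur complement of the `{i}ᶜ` block gives
`det Θ* = det M - (vᵀ D⁻¹ v) det D < det M`, where `D` is the `{i}ᶜ` block and `v ≠ 0` the
off-diagonal part of row `i`.
Every other term of the objective is a sum over entries, and an entry `x` that is zeroed
contributes `x Sⱼᵢ + λ(α|x| + (1-α)x²/2) ≥ 0` since `|Sⱼᵢ| ≤ λα`. Hence `M` has a strictly
smaller objective than `Θ*`.
-/

open Matrix BigOperators

/-- The graphical elastic net objective (zero target):
`-log det Θ + tr(SΘ) + λ(α‖Θ‖₁ + (1-α)/2 ‖Θ‖₂²)`. -/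
noncomputable def gelnetObj {p : ℕ} (S : Matrix (Fin p) (Fin p) ℝ) (l a : ℝ)
    (Θ : Matrix (Fin p) (Fin p) ℝ) : ℝ :=
  -Real.log Θ.det + (S * Θ).trace +
    l * (a * ∑ i, ∑ j, |Θ i j| + (1 - a) / 2 * ∑ i, ∑ j, (Θ i j) ^ 2)

namespace Matrix

section Blocks

open scoped ComplexOrder

variable {m n 𝕜 : Type*} [Fintype m] [Fintype n] [DecidableEq m] [DecidableEq n] [RCLike 𝕜]

theorem PosDef.fromBlocks_zero_zero {A : Matrix m m 𝕜} {D : Matrix n n 𝕜} (hA : A.PosDef)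
    (hD : D.PosDef) : (fromBlocks A 0 0 D).PosDef := by
  let _ := hA.isUnit.invertible
  have hpsd : (fromBlocks A 0 0ᴴ D).PosSemidef := by
    rw [PosDef.fromBlocks₁₁ _ _ hA]
    simpa using hD.posSemidef
  rw [conjTranspose_zero] at hpsd
  rw [hpsd.posDef_iff_det_ne_zero, det_fromBlocks_zero₂₁]
  exact mul_ne_zero hA.det_pos.ne' hD.det_pos.ne'

/-- Fischer's inequality, strict, for a one-dimensional first block. -/
theorem PosDef.det_lt_det_toBlocks₁₁_mul_det_toBlocks₂₂ [Unique m]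
    {N : Matrix (m ⊕ n) (m ⊕ n) ℝ} (hN : N.PosDef) (h₁₂ : N.toBlocks₁₂ ≠ 0) :
    N.det < N.toBlocks₁₁.det * N.toBlocks₂₂.det := by
  have h₂₂ : N.toBlocks₂₂.PosDef := hN.submatrix Sum.inr_injective
  let _ := h₂₂.isUnit.invertible
  have h₂₁ : N.toBlocks₂₁ = N.toBlocks₁₂ᴴ := by
    ext k j
    exact (hN.isHermitian.apply _ _).symm
  set v : n → ℝ := fun j => N.toBlocks₁₂ default j
  have hv : v ≠ 0 := fun hv => h₁₂ (by
    ext k j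
    simpa [v, Unique.eq_default k] using congrFun hv j)
  have hq : 0 < v ⬝ᵥ (N.toBlocks₂₂⁻¹ *ᵥ v) := by
    simpa using h₂₂.inv.dotProduct_mulVec_pos hv
  have hschur : (N.toBlocks₁₂ * N.toBlocks₂₂⁻¹ * N.toBlocks₁₂ᴴ) default default =
      v ⬝ᵥ (N.toBlocks₂₂⁻¹ *ᵥ v) := by
    rw [Matrix.mul_assoc]
    simp only [mul_apply, conjTranspose_apply, star_trivial, mulVec, dotProduct, v]
  conv_lhs => rw [← fromBlocks_toBlocks N, h₂₁, det_fromBlocks₂₂]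
  rw [mul_comm, det_unique, sub_apply, invOf_eq_nonsing_inv, hschur, det_unique N.toBlocks₁₁]
  exact mul_lt_mul_of_pos_right (sub_lt_self _ hq) h₂₂.det_pos

end Blocks

variable {ι α : Type*}

def decouple [Zero α] (P : ι → Prop) [DecidablePred P] (M : Matrix ι ι α) : Matrix ι ι α :=
  of fun k m => if (P k ↔ P m) then M k m else 0

theorem decouple_submatrix_sumCompl [Zero α] (P : ι → Prop) [DecidablePred P]
    (M : Matrix ι ι α) :
    (M.decouple P).submatrix (Equiv.sumCompl P) (Equiv.sumCompl P) =
      fromBlocks (M.submatrix (Equiv.sumCompl P) (Equiv.sumCompl P)).toBlocks₁₁ 0 0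
        (M.submatrix (Equiv.sumCompl P) (Equiv.sumCompl P)).toBlocks₂₂ := by
  ext (k | k) (m | m) <;> simp [decouple, toBlocks₁₁, toBlocks₂₂, k.2, m.2]

variable [Fintype ι] [DecidableEq ι]

open scoped ComplexOrder in
theorem PosDef.decouple {𝕜 : Type*} [RCLike 𝕜] {M : Matrix ι ι 𝕜} (hM : M.PosDef)
    (P : ι → Prop) [DecidablePred P] : (M.decouple P).PosDef := by
  set N := M.submatrix (Equiv.sumCompl P) (Equiv.sumCompl P)
  have hN : N.PosDef := hM.submatrix (Equiv.sumCompl P).injective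
  have h : (fromBlocks N.toBlocks₁₁ 0 0 N.toBlocks₂₂).PosDef :=
    (hN.submatrix Sum.inl_injective).fromBlocks_zero_zero (hN.submatrix Sum.inr_injective)
  rw [← decouple_submatrix_sumCompl] at h
  simpa using h.submatrix (Equiv.sumCompl P).symm.injective

theorem PosDef.det_lt_det_decouple {M : Matrix ι ι ℝ} (hM : M.PosDef) {i j : ι} (hji : j ≠ i)
    (hM_ij : M i j ≠ 0) : M.det < (M.decouple (· = i)).det := by
  set e := Equiv.sumCompl (· = i)
  have h₁₂ : (M.submatrix e e).toBlocks₁₂ ≠ 0 := fun h => hM_ij (by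
    simpa [e, toBlocks₁₂] using congrFun (congrFun h ⟨i, rfl⟩) ⟨j, hji⟩)
  rw [← det_submatrix_equiv_self e M, ← det_submatrix_equiv_self e, decouple_submatrix_sumCompl,
    det_fromBlocks_zero₂₁]
  exact (hM.submatrix e.injective).det_lt_det_toBlocks₁₁_mul_det_toBlocks₂₂ h₁₂

end Matrix

noncomputable def elasticNetPenalty (l a x : ℝ) : ℝ :=
  l * (a * |x| + (1 - a) / 2 * x ^ 2)

theorem mul_add_elasticNetPenalty_nonneg {x s l a : ℝ} (hs : |s| ≤ l * a) (hl : 0 ≤ l)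
    (ha : a ≤ 1) : 0 ≤ x * s + elasticNetPenalty l a x := by
  have hlin : -(x * s) ≤ |x| * (l * a) :=
    (neg_le_abs _).trans ((abs_mul x s).trans_le (mul_le_mul_of_nonneg_left hs (abs_nonneg x)))
  have hquad : 0 ≤ l * (1 - a) / 2 * x ^ 2 := by
    have := sub_nonneg.2 ha
    positivity
  rw [elasticNetPenalty]
  linarith

theorem gelnetObj_eq_neg_log_det_add_sum {p : ℕ} (S Θ : Matrix (Fin p) (Fin p) ℝ) (l a : ℝ) :
    gelnetObj S l a Θ =
      -Real.log Θ.det + ∑ k, ∑ m, (Θ k m * S m k + elasticNetPenalty l a (Θ k m)) := by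
  rw [gelnetObj, trace_mul_comm]
  simp only [elasticNetPenalty, trace, diag, mul_apply, mul_add, Finset.mul_sum,
    Finset.sum_add_distrib]
  ring

theorem gelnetObj_decouple_lt {p : ℕ} {S Θ : Matrix (Fin p) (Fin p) ℝ} {l a : ℝ}
    (hl : 0 ≤ l) (ha : a ≤ 1) (hsmall : ∀ i j, i ≠ j → |S i j| ≤ l * a)
    (hΘ : Θ.PosDef) {i j : Fin p} (hji : j ≠ i) (hΘ_ij : Θ i j ≠ 0) :
    gelnetObj S l a (Θ.decouple (· = i)) < gelnetObj S l a Θ := by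
  rw [gelnetObj_eq_neg_log_det_add_sum, gelnetObj_eq_neg_log_det_add_sum]
  refine add_lt_add_of_lt_of_le ?_ (Finset.sum_le_sum fun k _ => Finset.sum_le_sum fun m _ => ?_)
  · exact neg_lt_neg (Real.log_lt_log hΘ.det_pos (hΘ.det_lt_det_decouple hji hΘ_ij))
  · by_cases hkm : (k = i ↔ m = i)
    · simp only [decouple, of_apply, if_pos hkm, le_refl]
    · have hmk : m ≠ k := fun h => hkm (h ▸ Iff.rfl)
      simpa [decouple, hkm, elasticNetPenalty] using
        mul_add_elasticNetPenalty_nonneg (x := Θ k m) (hsmall m k hmk) hl ha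

theorem gelnet_minimizer_diagonal_of_small_offdiag_general {p : ℕ}
    (S Θstar : Matrix (Fin p) (Fin p) ℝ) (l a : ℝ)
    (hl : 0 < l) (ha : a ∈ Set.Ioc (0 : ℝ) 1)
    (hΘ : Θstar.PosDef)
    (hmin : ∀ Θ : Matrix (Fin p) (Fin p) ℝ, Θ.PosDef →
      gelnetObj S l a Θstar ≤ gelnetObj S l a Θ)
    (hsmall : ∀ i j, i ≠ j → |S i j| ≤ l * a) :
    ∀ i j, i ≠ j → Θstar i j = 0 := by
  intro i j hij
  by_contra hne
  exact (hmin _ (hΘ.decouple (· = i))).not_gt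
    (gelnetObj_decouple_lt hl.le ha.2 hsmall hΘ hij.symm hne)

/-- If all off-diagonal entries of `S` satisfy `|S i j| ≤ λα`, then the graphical
elastic net minimizer is diagonal. -/
theorem gelnet_minimizer_diagonal_of_small_offdiag {p : ℕ}
    (S Θstar : Matrix (Fin p) (Fin p) ℝ) (l a : ℝ)
    (hl : 0 < l) (ha : a ∈ Set.Ioc (0 : ℝ) 1)
    (hS : S.PosSemidef)
    (hΘ : Θstar.PosDef)
    (hmin : ∀ Θ : Matrix (Fin p) (Fin p) ℝ, Θ.PosDef →
      gelnetObj S l a Θstar ≤ gelnetObj S l a Θ)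
    (hsmall : ∀ i j, i ≠ j → |S i j| ≤ l * a) :
    ∀ i j, i ≠ j → Θstar i j = 0 :=
  gelnet_minimizer_diagonal_of_small_offdiag_general S Θstar l a hl ha hΘ hmin hsmall
end

section
/- Define on the vertex set V = {1,...,p} two graphs: G with edges E_{ij} = 1 iff i ≠ j and |S_{ij}| > λα, and 𝒢 with edges ℰ_{ij} = 1 iff i ≠ j and Θ*_{ij} ≠ 0, where Θ* is the graphical elastic net minimizer. Then every connected component of 𝒢 is contained in a connected component of G; that is, if Θ*_{ij} ≠ 0 for i ≠ j, then i and j lie in the same connected component of G. -/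
open Matrix BigOperators

/-!
Let `C` be the connected component of `i` in the thresholded graph, and compare `Θ*` with its
pinching along `{C, Cᶜ}`, i.e. `Θ*` with the entries linking `C` to `Cᶜ` set to `0`. The pinching
is still positive definite, and it does not increase the trace and penalty terms: on every zeroed
entry `|S u v| ≤ λα`, so `S u v Θ v u` is dominated by the ℓ1 part of the penalty. If one of the
zeroed entries is nonzero, the pinching has strictly larger determinant (strict Fischer
inequality: by the Schur complement formula this reduces to `det M < det (M + P)` for `M ≻ 0`
and `0 ≠ P ⪰ 0`), hence strictly smaller objective, contradicting the minimality of `Θ*`.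
-/

namespace Matrix

variable {m n : Type*}

def pinching {α : Type*} [Zero α] (C : n → Prop) [DecidablePred C] (M : Matrix n n α) :
    Matrix n n α :=
  of fun i j => if (C i ↔ C j) then M i j else 0

theorem pinching_submatrix_sumCompl {α : Type*} [Zero α] (C : n → Prop) [DecidablePred C]
    (M : Matrix n n α) :
    (M.pinching C).submatrix (Equiv.sumCompl C) (Equiv.sumCompl C) =
      fromBlocks (M.submatrix (Equiv.sumCompl C) (Equiv.sumCompl C)).toBlocks₁₁ 0 0
        (M.submatrix (Equiv.sumCompl C) (Equiv.sumCompl C)).toBlocks₂₂ := by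
  ext (i | i) (j | j) <;> simp [pinching, toBlocks₁₁, toBlocks₂₂, i.2, j.2]

variable [Fintype m] [Fintype n] [DecidableEq n]

theorem PosSemidef.one_lt_det_one_add {Q : Matrix n n ℝ} (hQ : Q.PosSemidef) (hQ0 : Q ≠ 0) :
    1 < (1 + Q).det := by
  have hdiag : 1 + Q = Unitary.conjStarAlgAut ℝ _ hQ.1.eigenvectorUnitary
      (diagonal (1 + hQ.1.eigenvalues)) := by
    conv_lhs => rw [hQ.1.spectral_theorem]
    rw [← map_one (Unitary.conjStarAlgAut ℝ _ hQ.1.eigenvectorUnitary), ← map_add,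
      ← diagonal_one, diagonal_add]
    rfl
  have hdet : (1 + Q).det = ∏ i, (1 + hQ.1.eigenvalues i) := by
    rw [hdiag]
    simp [-Unitary.conjStarAlgAut_apply, det_diagonal]
  obtain ⟨k, hk⟩ : ∃ k, hQ.1.eigenvalues k ≠ 0 := by
    by_contra! h
    exact hQ0 (hQ.1.eigenvalues_eq_zero_iff.mp (funext h))
  have hnonneg := hQ.eigenvalues_nonneg
  rw [hdet]
  calc (1 : ℝ) = ∏ _i : n, 1 := Finset.prod_const_one.symm
    _ < ∏ i, (1 + hQ.1.eigenvalues i) :=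
      Finset.prod_lt_prod (fun _ _ => one_pos) (fun i _ => by linarith [hnonneg i])
        ⟨k, Finset.mem_univ k, by linarith [lt_of_le_of_ne (hnonneg k) hk.symm]⟩

open scoped MatrixOrder in
theorem PosDef.det_lt_det_add {M P : Matrix n n ℝ} (hM : M.PosDef) (hP : P.PosSemidef)
    (hP0 : P ≠ 0) : M.det < (M + P).det := by
  obtain ⟨B, rfl⟩ := CStarAlgebra.nonneg_iff_eq_star_mul_self.mp hM.posSemidef.nonneg
  have hB : IsUnit B.det := by
    have := hM.det_pos
    rw [star_eq_conjTranspose, det_mul, det_conjTranspose] at this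
    exact isUnit_iff_ne_zero.mpr fun h => by simp [h] at this
  set Q := B⁻¹ᴴ * P * B⁻¹
  have hQ : Q.PosSemidef := hP.conjTranspose_mul_mul_same _
  have hBQB : Bᴴ * Q * B = P := by
    rw [show Bᴴ * (B⁻¹ᴴ * P * B⁻¹) * B
      = (Bᴴ * B⁻¹ᴴ) * P * (B⁻¹ * B) by simp only [Matrix.mul_assoc],
      ← conjTranspose_mul, nonsing_inv_mul _ hB, conjTranspose_one, Matrix.one_mul,
      Matrix.mul_one]
  have hQ0 : Q ≠ 0 := fun h => hP0 <| by rw [← hBQB, h, Matrix.mul_zero, Matrix.zero_mul]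
  have hsum : star B * B + P = Bᴴ * (1 + Q) * B := by
    rw [Matrix.mul_add, Matrix.add_mul, Matrix.mul_one, hBQB, star_eq_conjTranspose]
  have hdet : (star B * B + P).det = (star B * B).det * (1 + Q).det := by
    rw [hsum, det_mul, det_mul, star_eq_conjTranspose, det_mul]
    ring
  rw [hdet]
  exact lt_mul_of_one_lt_right hM.det_pos (hQ.one_lt_det_one_add hQ0)

theorem PosDef.conjTranspose_mul_mul_same_ne_zero {A : Matrix m m ℝ} (hA : A.PosDef)
    {B : Matrix m n ℝ} (hB : B ≠ 0) : Bᴴ * A * B ≠ 0 := by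
  obtain ⟨i, j, hij⟩ : ∃ i j, B i j ≠ 0 := by
    by_contra! h
    exact hB (Matrix.ext h)
  have hcol : B *ᵥ Pi.single j 1 ≠ 0 := fun h => hij <| by
    simpa [mulVec_single_one] using congrFun h i
  intro h
  have := hA.dotProduct_mulVec_pos hcol
  rw [star_mulVec, ← dotProduct_mulVec, mulVec_mulVec, mulVec_mulVec, h] at this
  simp at this

theorem PosDef.det_fromBlocks_lt [DecidableEq m] {A : Matrix m m ℝ} {B : Matrix m n ℝ}
    {D : Matrix n n ℝ} (hT : (fromBlocks A B Bᴴ D).PosDef) (hB : B ≠ 0) :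
    (fromBlocks A B Bᴴ D).det < A.det * D.det := by
  have hA : A.PosDef := hT.submatrix Sum.inl_injective
  let := invertibleOfIsUnitDet A (isUnit_iff_ne_zero.mpr hA.det_pos.ne')
  have hdet : (fromBlocks A B Bᴴ D).det = A.det * (D - Bᴴ * A⁻¹ * B).det := by
    rw [det_fromBlocks₁₁, invOf_eq_nonsing_inv]
  have hSchur : (D - Bᴴ * A⁻¹ * B).PosDef := by
    refine ((PosDef.fromBlocks₁₁ B D hA).mp hT.posSemidef).posDef_iff_det_ne_zero.mpr ?_
    intro h
    have := hT.det_pos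
    rw [hdet, h, mul_zero] at this
    exact this.false
  rw [hdet]
  refine mul_lt_mul_of_pos_left ?_ hA.det_pos
  simpa using hSchur.det_lt_det_add (hA.inv.posSemidef.conjTranspose_mul_mul_same B)
    (hA.inv.conjTranspose_mul_mul_same_ne_zero hB)

theorem PosDef.fromBlocks_zero [DecidableEq m] {A : Matrix m m ℝ} {D : Matrix n n ℝ}
    (hA : A.PosDef) (hD : D.PosDef) : (fromBlocks A 0 0 D).PosDef := by
  let := invertibleOfIsUnitDet A (isUnit_iff_ne_zero.mpr hA.det_pos.ne')
  have hpsd : (fromBlocks A 0 (0 : Matrix m n ℝ)ᴴ D).PosSemidef :=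
    (PosDef.fromBlocks₁₁ 0 D hA).mpr (by rw [Matrix.mul_zero, sub_zero]; exact hD.posSemidef)
  rw [conjTranspose_zero] at hpsd
  rw [hpsd.posDef_iff_det_ne_zero, det_fromBlocks_zero₂₁]
  exact (mul_pos hA.det_pos hD.det_pos).ne'

variable {C : n → Prop} [DecidablePred C]

theorem PosDef.pinching {M : Matrix n n ℝ} (hM : M.PosDef) : (M.pinching C).PosDef := by
  have hT := hM.submatrix (Equiv.sumCompl C).injective
  have h : (fromBlocks (M.submatrix (Equiv.sumCompl C) (Equiv.sumCompl C)).toBlocks₁₁ 0 0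
      (M.submatrix (Equiv.sumCompl C) (Equiv.sumCompl C)).toBlocks₂₂).PosDef :=
    .fromBlocks_zero (hT.submatrix Sum.inl_injective) (hT.submatrix Sum.inr_injective)
  rw [← pinching_submatrix_sumCompl] at h
  simpa using h.submatrix (Equiv.sumCompl C).symm.injective

theorem PosDef.det_lt_det_pinching {M : Matrix n n ℝ} (hM : M.PosDef) {i j : n} (hi : C i)
    (hj : ¬C j) (hij : M i j ≠ 0) : M.det < (M.pinching C).det := by
  set T := M.submatrix (Equiv.sumCompl C) (Equiv.sumCompl C)
  have hT : T.PosDef := hM.submatrix (Equiv.sumCompl C).injective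
  have hBlocks : T = fromBlocks T.toBlocks₁₁ T.toBlocks₁₂ T.toBlocks₁₂ᴴ T.toBlocks₂₂ := by
    have hherm := hT.1
    rw [← fromBlocks_toBlocks T, isHermitian_fromBlocks_iff] at hherm
    rw [hherm.2.1, fromBlocks_toBlocks]
  have hB : T.toBlocks₁₂ ≠ 0 := fun h => hij (congrFun (congrFun h ⟨i, hi⟩) ⟨j, hj⟩)
  rw [← det_submatrix_equiv_self (Equiv.sumCompl C) M,
    ← det_submatrix_equiv_self (Equiv.sumCompl C) (M.pinching C), pinching_submatrix_sumCompl,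
    det_fromBlocks_zero₂₁]
  have hlt := (hBlocks ▸ hT).det_fromBlocks_lt hB
  rwa [← hBlocks] at hlt

end Matrix

noncomputable def elasticPenalty (l a x : ℝ) : ℝ :=
  l * (a * |x| + (1 - a) / 2 * x ^ 2)

theorem neg_elasticPenalty_le_mul {l a s : ℝ} (hl : 0 ≤ l) (ha : a ≤ 1) (hs : |s| ≤ l * a)
    (x : ℝ) : -elasticPenalty l a x ≤ s * x := by
  have hlin : -(l * a * |x|) ≤ s * x := by
    calc -(l * a * |x|) ≤ -(|s| * |x|) :=
          neg_le_neg (mul_le_mul_of_nonneg_right hs (abs_nonneg x))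
      _ = -|s * x| := by rw [abs_mul]
      _ ≤ s * x := neg_abs_le _
  have hquad : 0 ≤ l * ((1 - a) / 2 * x ^ 2) :=
    mul_nonneg hl (mul_nonneg (by linarith) (sq_nonneg x))
  unfold elasticPenalty
  linarith [mul_add l (a * |x|) ((1 - a) / 2 * x ^ 2), mul_assoc l a |x|]

theorem gelnetObj_eq_sum {p : ℕ} (S Θ : Matrix (Fin p) (Fin p) ℝ) (l a : ℝ) :
    gelnetObj S l a Θ =
      -Real.log Θ.det + ∑ u, ∑ v, (S u v * Θ v u + elasticPenalty l a (Θ u v)) := by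
  simp only [gelnetObj, elasticPenalty, trace, diag_apply, mul_apply, Finset.sum_add_distrib,
    Finset.mul_sum, mul_add]
  ring

theorem gelnetObj_pinching_lt {p : ℕ} {S Θ : Matrix (Fin p) (Fin p) ℝ} {l a : ℝ}
    {C : Fin p → Prop} [DecidablePred C] (hl : 0 ≤ l) (ha : a ≤ 1) (hΘ : Θ.PosDef)
    (hS : ∀ u v, ¬(C u ↔ C v) → |S u v| ≤ l * a) {i j : Fin p} (hi : C i) (hj : ¬C j)
    (hij : Θ i j ≠ 0) : gelnetObj S l a (Θ.pinching C) < gelnetObj S l a Θ := by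
  have hlog : Real.log Θ.det < Real.log (Θ.pinching C).det :=
    Real.log_lt_log hΘ.det_pos (hΘ.det_lt_det_pinching hi hj hij)
  have hsum : ∑ u, ∑ v, (S u v * Θ.pinching C v u + elasticPenalty l a (Θ.pinching C u v)) ≤
      ∑ u, ∑ v, (S u v * Θ v u + elasticPenalty l a (Θ u v)) := by
    refine Finset.sum_le_sum fun u _ => Finset.sum_le_sum fun v _ => ?_
    by_cases huv : C u ↔ C v
    · simp only [pinching, of_apply, if_pos huv, if_pos huv.symm, le_refl]
    · have hvu : ¬(C v ↔ C u) := fun h => huv h.symm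
      have hsymm : Θ v u = Θ u v := by simpa using hΘ.1.apply u v
      simp only [pinching, of_apply, if_neg huv, if_neg hvu, hsymm]
      have hzero : elasticPenalty l a 0 = 0 := by simp [elasticPenalty]
      rw [mul_zero, hzero, zero_add]
      linarith [neg_elasticPenalty_le_mul hl ha (hS u v huv) (Θ u v)]
  rw [gelnetObj_eq_sum, gelnetObj_eq_sum]
  linarith

theorem SimpleGraph.reachable_fromRel_of_rel {V : Type*} {r : V → V → Prop} {u v : V}
    (h : r u v) : (SimpleGraph.fromRel r).Reachable u v := by
  by_cases huv : u = v
  · exact huv ▸ .rfl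
  · exact SimpleGraph.Adj.reachable ((SimpleGraph.fromRel_adj r u v).mpr ⟨huv, .inl h⟩)

theorem gelnet_components_subset_thresholded_general {p : ℕ}
    (S Θstar : Matrix (Fin p) (Fin p) ℝ) (l a : ℝ)
    (hl : 0 < l) (ha : a ∈ Set.Ioc (0 : ℝ) 1)
    (hΘ : Θstar.PosDef)
    (hmin : ∀ Θ : Matrix (Fin p) (Fin p) ℝ, Θ.PosDef →
      gelnetObj S l a Θstar ≤ gelnetObj S l a Θ) :
    ∀ i j : Fin p, i ≠ j → Θstar i j ≠ 0 →
      (SimpleGraph.fromRel fun i j : Fin p => l * a < |S i j|).Reachable i j := by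
  classical
  intro i j _ hij
  by_contra hreach
  set G := SimpleGraph.fromRel fun i j : Fin p => l * a < |S i j|
  have hcross : ∀ u v, ¬(G.Reachable i u ↔ G.Reachable i v) → |S u v| ≤ l * a := by
    intro u v huv
    by_contra! hSuv
    have huv' : G.Reachable u v := SimpleGraph.reachable_fromRel_of_rel hSuv
    exact huv ⟨fun hu => hu.trans huv', fun hv => hv.trans huv'.symm⟩
  exact (hmin _ hΘ.pinching).not_gt (gelnetObj_pinching_lt hl.le ha.2 hΘ hcross .rfl hreach hij)

/-- Every edge (hence every connected component) of the estimated graph `𝒢`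
(nonzero off-diagonal entries of the minimizer `Θ*`) lies within a connected
component of the thresholded covariance graph `G` (edges where `|S i j| > λα`). -/
theorem gelnet_components_subset_thresholded {p : ℕ}
    (S Θstar : Matrix (Fin p) (Fin p) ℝ) (l a : ℝ)
    (hl : 0 < l) (ha : a ∈ Set.Ioc (0 : ℝ) 1)
    (hS : S.PosSemidef)
    (hΘ : Θstar.PosDef)
    (hmin : ∀ Θ : Matrix (Fin p) (Fin p) ℝ, Θ.PosDef →
      gelnetObj S l a Θstar ≤ gelnetObj S l a Θ) :
    ∀ i j : Fin p, i ≠ j → Θstar i j ≠ 0 →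
      (SimpleGraph.fromRel fun i j : Fin p => l * a < |S i j|).Reachable i j :=
  gelnet_components_subset_thresholded_general S Θstar l a hl ha hΘ hmin
end

section
/- If λ > 0 and α ∈ [0,1), the graphical elastic net objective F(Θ) = -log det Θ + tr(SΘ) + λ(α‖Θ‖₁ + (1-α)/2‖Θ‖₂²) is coercive on the positive definite cone: F(Θ) → ∞ as ‖Θ‖₂ → ∞ or as the smallest eigenvalue of Θ tends to 0, for any symmetric positive semidefinite S. Hence a minimizer exists. -/
/-!
For `Θ ≻ 0` with eigenvalues `μᵢ`, the trace and `ℓ₁` terms are nonnegative, so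
`F(Θ) ≥ c ‖Θ‖₂² - log det Θ = ∑ᵢ (c μᵢ² - log μᵢ)` with `c = λ(1-α)/2 > 0`. Applying
`log x ≤ x - 1` at `x = c μᵢ²` bounds every summand below by `c μᵢ²/2 + (1 + log c)/2`, and the
summand of the smallest eigenvalue also by `-log μᵢ`. Hence `F(Θ) ≥ c ‖Θ‖₂²/2 + O(1)` and
`F(Θ) ≥ -log λ_min(Θ) + O(1)`, which is the coercivity.

For the minimizer, choose `ε, R` so that `F > F(1)` whenever `‖Θ‖₂² ≥ R` or some Rayleigh quotient
of `Θ` is below `ε`. The symmetric matrices with `‖Θ‖₂² ≤ R` and all Rayleigh quotients `≥ ε` form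
a compact subset of the positive definite cone, on which `F` is continuous; its minimizer there
beats every positive definite matrix outside it.
-/

open Matrix BigOperators

theorem Real.half_mul_sq_add_le_mul_sq_sub_log {c μ : ℝ} (hc : 0 < c) (hμ : 0 < μ) :
    c / 2 * μ ^ 2 + (1 + Real.log c) / 2 ≤ c * μ ^ 2 - Real.log μ := by
  have h := Real.log_le_sub_one_of_pos (mul_pos hc (pow_pos hμ 2))
  rw [Real.log_mul hc.ne' (pow_pos hμ 2).ne', Real.log_pow, Nat.cast_ofNat] at h
  linarith

theorem IsCompact.exists_isMinOn_of_lt_of_notMem {X β : Type*} [TopologicalSpace X]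
    [LinearOrder β] [TopologicalSpace β] [ClosedIicTopology β] {f : X → β} {U K : Set X}
    (hK : IsCompact K) (hKU : K ⊆ U) (hf : ContinuousOn f K) {x₀ : X} (hx₀ : x₀ ∈ U)
    (hout : ∀ x ∈ U, x ∉ K → f x₀ < f x) : ∃ x ∈ U, IsMinOn f U x := by
  have hx₀K : x₀ ∈ K := by
    by_contra h
    exact lt_irrefl _ (hout x₀ hx₀ h)
  obtain ⟨x, hxK, hmin⟩ := hK.exists_isMinOn ⟨x₀, hx₀K⟩ hf
  refine ⟨x, hKU hxK, fun y hy => ?_⟩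
  by_cases hyK : y ∈ K
  · exact hmin hyK
  · exact (hmin hx₀K).trans (hout y hy hyK).le

namespace Matrix

variable {n : Type*} [Fintype n]

theorem sq_apply_le_sum_sq {m : Type*} [Fintype m] (A : Matrix m n ℝ) (i : m) (j : n) :
    A i j ^ 2 ≤ ∑ i, ∑ j, A i j ^ 2 :=
  (Finset.single_le_sum (fun j _ => sq_nonneg (A i j)) (Finset.mem_univ j)).trans
    (Finset.single_le_sum (f := fun i => ∑ j, A i j ^ 2)
      (fun i _ => Finset.sum_nonneg fun j _ => sq_nonneg (A i j)) (Finset.mem_univ i))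

def frobeniusRayleighSet (ε R : ℝ) : Set (Matrix n n ℝ) :=
  {A | A.IsHermitian ∧ ∑ i, ∑ j, A i j ^ 2 ≤ R ∧ ∀ x, ε * (x ⬝ᵥ x) ≤ x ⬝ᵥ A *ᵥ x}

theorem isCompact_frobeniusRayleighSet (ε R : ℝ) :
    IsCompact (frobeniusRayleighSet (n := n) ε R) := by
  have hclosed : IsClosed (frobeniusRayleighSet (n := n) ε R) := by
    simp only [frobeniusRayleighSet, Set.ofPred_and, Set.ofPred_forall]
    exact (isClosed_eq continuous_id.matrix_conjTranspose continuous_id).inter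
      ((isClosed_le (by fun_prop) continuous_const).inter
        (isClosed_iInter fun x => isClosed_le (by fun_prop) (by fun_prop)))
  refine (isCompact_univ_pi fun _ => isCompact_univ_pi fun _ => isCompact_Icc (a := -√R)
    (b := √R)).of_isClosed_subset hclosed fun A hA i _ j _ => ?_
  exact abs_le.1 (Real.abs_le_sqrt ((sq_apply_le_sum_sq A i j).trans hA.2.1))

theorem frobeniusRayleighSet_subset_posDef {ε : ℝ} (hε : 0 < ε) (R : ℝ) :
    frobeniusRayleighSet ε R ⊆ {A : Matrix n n ℝ | A.PosDef} := fun A hA =>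
  .of_dotProduct_mulVec_pos hA.1 fun x hx => by
    rw [star_trivial]
    exact (mul_pos hε (by simpa using dotProduct_self_star_pos_iff.2 hx)).trans_le (hA.2.2 x)

variable [DecidableEq n]

open scoped MatrixOrder in
theorem trace_mul_nonneg_of_posSemidef {S A : Matrix n n ℝ}
    (hS : S.PosSemidef) (hA : A.PosSemidef) : 0 ≤ (S * A).trace := by
  obtain ⟨B, rfl⟩ := CStarAlgebra.nonneg_iff_eq_star_mul_self.mp hS.nonneg
  rw [Matrix.mul_assoc, Matrix.trace_mul_comm, star_eq_conjTranspose]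
  exact (hA.mul_mul_conjTranspose_same B).trace_nonneg

theorem IsHermitian.sum_sq_eq_sum_sq_eigenvalues {A : Matrix n n ℝ} (hA : A.IsHermitian) :
    ∑ i, ∑ j, A i j ^ 2 = ∑ i, hA.eigenvalues i ^ 2 := by
  have htrace : (A * A).trace = ∑ i, ∑ j, A i j ^ 2 := by
    simp only [trace, diag, mul_apply, sq]
    refine Finset.sum_congr rfl fun i _ => Finset.sum_congr rfl fun j _ => ?_
    rw [← hA.apply i j, star_trivial]
  rw [← htrace]
  conv_lhs => rw [hA.spectral_theorem, ← map_mul, Unitary.conjStarAlgAut_apply, trace_mul_cycle,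
    Unitary.coe_star_mul_self, one_mul, diagonal_mul_diagonal, trace_diagonal]
  simp [sq]

open scoped MatrixOrder in
theorem IsHermitian.mul_dotProduct_self_le {A : Matrix n n ℝ} (hA : A.IsHermitian) {r : ℝ}
    (h : ∀ i, r ≤ hA.eigenvalues i) (x : n → ℝ) : r * (x ⬝ᵥ x) ≤ x ⬝ᵥ A *ᵥ x := by
  have hr : algebraMap ℝ (Matrix n n ℝ) r ≤ A := by
    rw [algebraMap_le_iff_le_spectrum (R := ℝ) hA.isSelfAdjoint,
      hA.spectrum_real_eq_range_eigenvalues]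
    rintro _ ⟨i, rfl⟩
    exact h i
  have hx := (Matrix.le_iff.1 hr).dotProduct_mulVec_nonneg x
  rw [Algebra.algebraMap_eq_smul_one, sub_mulVec, smul_mulVec, one_mulVec, star_trivial,
    dotProduct_sub, dotProduct_smul, smul_eq_mul] at hx
  linarith

theorem IsHermitian.exists_eigenvalues_lt {A : Matrix n n ℝ} (hA : A.IsHermitian) {r : ℝ}
    {x : n → ℝ} (hx : x ⬝ᵥ A *ᵥ x < r * (x ⬝ᵥ x)) : ∃ i, hA.eigenvalues i < r := by
  by_contra! h
  exact (hA.mul_dotProduct_self_le h x).not_gt hx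

theorem PosDef.log_det {A : Matrix n n ℝ} (hA : A.PosDef) :
    Real.log A.det = ∑ i, Real.log (hA.1.eigenvalues i) := by
  rw [hA.1.det_eq_prod_eigenvalues, RCLike.ofReal_real_eq_id, Function.id_def, Real.log_prod]
  exact fun i _ => (hA.eigenvalues_pos i).ne'

theorem PosDef.mul_sum_sq_sub_log_det {A : Matrix n n ℝ} (hA : A.PosDef) (c : ℝ) :
    c * ∑ i, ∑ j, A i j ^ 2 - Real.log A.det =
      ∑ i, (c * hA.1.eigenvalues i ^ 2 - Real.log (hA.1.eigenvalues i)) := by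
  rw [hA.1.sum_sq_eq_sum_sq_eigenvalues, hA.log_det, Finset.mul_sum, Finset.sum_sub_distrib]

theorem PosDef.half_mul_sum_sq_add_le {A : Matrix n n ℝ} (hA : A.PosDef) {c : ℝ} (hc : 0 < c) :
    c / 2 * ∑ i, ∑ j, A i j ^ 2 + Fintype.card n * ((1 + Real.log c) / 2) ≤
      c * ∑ i, ∑ j, A i j ^ 2 - Real.log A.det := by
  have h := Finset.sum_le_sum fun i (_ : i ∈ Finset.univ) =>
    Real.half_mul_sq_add_le_mul_sq_sub_log hc (hA.eigenvalues_pos i)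
  rwa [Finset.sum_add_distrib, ← Finset.mul_sum, Finset.sum_const, Finset.card_univ, nsmul_eq_mul,
    ← hA.1.sum_sq_eq_sum_sq_eigenvalues, ← hA.mul_sum_sq_sub_log_det] at h

theorem PosDef.neg_log_eigenvalues_add_le {A : Matrix n n ℝ} (hA : A.PosDef) {c : ℝ} (hc : 0 < c)
    (j : n) :
    -Real.log (hA.1.eigenvalues j) + (Fintype.card n - 1) * ((1 + Real.log c) / 2) ≤
      c * ∑ i, ∑ j, A i j ^ 2 - Real.log A.det := by
  have hexcess : ∀ i, 0 ≤ c * hA.1.eigenvalues i ^ 2 - Real.log (hA.1.eigenvalues i) -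
      (1 + Real.log c) / 2 := fun i => by
    have := Real.half_mul_sq_add_le_mul_sq_sub_log hc (hA.eigenvalues_pos i)
    linarith [mul_nonneg hc.le (sq_nonneg (hA.1.eigenvalues i))]
  have hj := Finset.single_le_sum (fun i _ => hexcess i) (Finset.mem_univ j)
  rw [Finset.sum_sub_distrib, Finset.sum_const, Finset.card_univ, nsmul_eq_mul,
    ← hA.mul_sum_sq_sub_log_det] at hj
  linarith [mul_nonneg hc.le (sq_nonneg (hA.1.eigenvalues j))]

theorem coercive_of_mul_sum_sq_sub_log_det_le {f : Matrix n n ℝ → ℝ} {c : ℝ} (hc : 0 < c)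
    (hf : ∀ A : Matrix n n ℝ, A.PosDef → c * ∑ i, ∑ j, A i j ^ 2 - Real.log A.det ≤ f A)
    (C : ℝ) :
    ∃ ε > (0 : ℝ), ∃ R : ℝ, ∀ A : Matrix n n ℝ, A.PosDef →
      ((R ≤ ∑ i, ∑ j, A i j ^ 2) ∨ (∃ x : n → ℝ, x ≠ 0 ∧ x ⬝ᵥ A *ᵥ x < ε * (x ⬝ᵥ x))) →
        C < f A := by
  refine ⟨Real.exp (-(C - (Fintype.card n - 1) * ((1 + Real.log c) / 2))), Real.exp_pos _,
    2 * (C - Fintype.card n * ((1 + Real.log c) / 2)) / c + 1, ?_⟩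
  rintro A hA (hbig | ⟨x, -, hx⟩) <;> have hfA := hf A hA
  · have hlow := hA.half_mul_sum_sq_add_le hc
    have hR := mul_le_mul_of_nonneg_left hbig (half_pos hc).le
    have hRval : c / 2 * (2 * (C - Fintype.card n * ((1 + Real.log c) / 2)) / c + 1) =
        C - Fintype.card n * ((1 + Real.log c) / 2) + c / 2 := by
      field_simp
    linarith
  · obtain ⟨j, hj⟩ := hA.1.exists_eigenvalues_lt hx
    have hlow := hA.neg_log_eigenvalues_add_le hc j
    have hlog := Real.log_lt_log (hA.eigenvalues_pos j) hj
    rw [Real.log_exp] at hlog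
    linarith

theorem exists_posDef_forall_le_of_coercive {f : Matrix n n ℝ → ℝ}
    (hf : ∀ A : Matrix n n ℝ, A.PosDef → ContinuousAt f A)
    (hcoer : ∀ C : ℝ, ∃ ε > (0 : ℝ), ∃ R : ℝ, ∀ A : Matrix n n ℝ, A.PosDef →
      ((R ≤ ∑ i, ∑ j, A i j ^ 2) ∨ (∃ x : n → ℝ, x ≠ 0 ∧ x ⬝ᵥ A *ᵥ x < ε * (x ⬝ᵥ x))) →
        C < f A) :
    ∃ A₀ : Matrix n n ℝ, A₀.PosDef ∧ ∀ A : Matrix n n ℝ, A.PosDef → f A₀ ≤ f A := by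
  obtain ⟨ε, hε, R, hR⟩ := hcoer (f 1)
  have hsub := frobeniusRayleighSet_subset_posDef (n := n) hε R
  obtain ⟨A₀, hA₀, hmin⟩ := (isCompact_frobeniusRayleighSet ε R).exists_isMinOn_of_lt_of_notMem
    hsub (fun A hA => (hf A (hsub hA)).continuousWithinAt) (PosDef.one (n := n) (R := ℝ))
    fun A hA hAK => by
      refine hR A hA ?_
      simp only [frobeniusRayleighSet, Set.mem_ofPred_eq, not_and_or, not_le, not_forall] at hAK
      rcases hAK with hnotHerm | hbig | ⟨x, hx⟩
      · exact absurd hA.1 hnotHerm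
      · exact .inl hbig.le
      · refine .inr ⟨x, ?_, hx⟩
        rintro rfl
        simp at hx
  exact ⟨A₀, hA₀, fun A hA => hmin hA⟩

end Matrix

theorem continuousAt_gelnetObj {p : ℕ} (S : Matrix (Fin p) (Fin p) ℝ) (l a : ℝ)
    {Θ : Matrix (Fin p) (Fin p) ℝ} (hΘ : Θ.det ≠ 0) : ContinuousAt (gelnetObj S l a) Θ := by
  unfold gelnetObj
  fun_prop (disch := exact hΘ)

theorem mul_sum_sq_sub_log_det_le_gelnetObj {p : ℕ} {S : Matrix (Fin p) (Fin p) ℝ} {l a : ℝ}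
    (hl : 0 ≤ l) (ha : 0 ≤ a) (hS : S.PosSemidef) {Θ : Matrix (Fin p) (Fin p) ℝ}
    (hΘ : Θ.PosSemidef) :
    l * (1 - a) / 2 * ∑ i, ∑ j, Θ i j ^ 2 - Real.log Θ.det ≤ gelnetObj S l a Θ := by
  have htrace := trace_mul_nonneg_of_posSemidef hS hΘ
  have hl1 : 0 ≤ l * (a * ∑ i, ∑ j, |Θ i j|) := mul_nonneg hl (mul_nonneg ha (by positivity))
  unfold gelnetObj
  linarith

/-- For `λ > 0` and `α ∈ [0,1)` the objective is coercive on the positive definite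
cone: it exceeds any level `C` whenever the (squared) Frobenius norm is large or the
smallest eigenvalue is small (the latter expressed via the Rayleigh quotient).
Hence a minimizer exists. -/
theorem gelnet_coercive_and_minimizer_exists {p : ℕ}
    (S : Matrix (Fin p) (Fin p) ℝ) (l a : ℝ)
    (hl : 0 < l) (ha : a ∈ Set.Ico (0 : ℝ) 1) (hS : S.PosSemidef) :
    (∀ C : ℝ, ∃ ε > (0 : ℝ), ∃ R : ℝ,
      ∀ Θ : Matrix (Fin p) (Fin p) ℝ, Θ.PosDef →
        ((R ≤ ∑ i, ∑ j, (Θ i j) ^ 2) ∨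
          (∃ x : Fin p → ℝ, x ≠ 0 ∧ x ⬝ᵥ (Θ *ᵥ x) < ε * (x ⬝ᵥ x))) →
        C < gelnetObj S l a Θ) ∧
    ∃ Θstar : Matrix (Fin p) (Fin p) ℝ, Θstar.PosDef ∧
      ∀ Θ : Matrix (Fin p) (Fin p) ℝ, Θ.PosDef →
        gelnetObj S l a Θstar ≤ gelnetObj S l a Θ := by
  obtain ⟨ha0, ha1⟩ := ha
  have hc : 0 < l * (1 - a) / 2 := by
    have : 0 < 1 - a := sub_pos.2 ha1
    positivity
  have hcoer := Matrix.coercive_of_mul_sum_sq_sub_log_det_le hc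
    fun Θ hΘ => mul_sum_sq_sub_log_det_le_gelnetObj hl.le ha0 hS hΘ.posSemidef
  exact ⟨hcoer, Matrix.exists_posDef_forall_le_of_coercive
    (fun _ hΘ => continuousAt_gelnetObj S l a hΘ.det_pos.ne') hcoer⟩
end
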